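/- Let T, H, n be natural numbers with n ≥ 1, let γ be a real number with 0 < γ ≤ 1, and let ε ≥ 0. Let τ : {0,1,...,n} → ℕ be a strictly increasing sequence of review times with τ(0) = 1, τ(n) = T + 1, and τ(i+1) − τ(i) ≥ H + 1 for every i < n (so each block {τ(i), ..., τ(i+1) − 1} contains the window {τ(i), ..., τ(i) + H}). Let r* , r̃ : ℕ → ℝ be two reward sequences (the per-period rewards of the hindsight-best policy π* and of the bandit-modified policy π̃) that agree outside the windows: r*(t) = r̃(t) whenever τ(i) + H < t ≤ τ(i+1) − 1 for some i < n. Suppose that for every i < n the discounted regret incurred in window i is at most ε, i.e. ∑_{t = τ(i)}^{τ(i)+H} γ^t (r*(t) − r̃(t)) ≤ ε. Then the time-averaged discounted reward of π̃ is within ε·n/T of that of π*: (1/T) ∑_{t=1}^{T} γ^t r̃(t) ≥ (1/T) ∑_{t=1}^{T} γ^t r*(t) − ε·n/T; in particular, since n ≤ T, it is within ε, so π̃ is an ε-equilibrium policy in the sense that (1/T) ∑_{t=1}^{T} γ^t r̃(t) ≥ (1/T) ∑_{t=1}^{T} γ^t r*(t) − ε. -/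

import Mathlib

/-!
The total discounted regret over `{1, ..., T} = [τ 0, τ n)` splits into the regrets of the `n`
blocks `[τ i, τ (i + 1))`. Since the two reward sequences agree in a block after its window, the
regret of each block is the regret of its window, hence at most `ε`; so the total regret is at
most `ε n`, and `n ≤ T` because `τ` increases by at least one at each step.
-/

open Finset

variable {M : Type*}

theorem Finset.sum_Ico_eq_sum_range_sum_Ico [AddCommMonoid M] (f : ℕ → M) {τ : ℕ → ℕ}
    {n : ℕ} (hτ : MonotoneOn τ (Set.Iic n)) :
    ∑ t ∈ Ico (τ 0) (τ n), f t =
      ∑ i ∈ range n, ∑ t ∈ Ico (τ i) (τ (i + 1)), f t := by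
  induction n with
  | zero => simp
  | succ n ih =>
    have h0n : τ 0 ≤ τ n := hτ (by simp) (by simp) n.zero_le
    have hnsucc : τ n ≤ τ (n + 1) := hτ (by simp) (by simp) n.le_succ
    rw [sum_range_succ, ← ih (hτ.mono (Set.Iic_subset_Iic.2 n.le_succ)),
      sum_Ico_consecutive f h0n hnsucc]

theorem Finset.sum_Ico_eq_sum_Icc_of_eq_zero [AddCommMonoid M] {f : ℕ → M} {a b H : ℕ}
    (hab : a + H < b) (hf : ∀ t, a + H < t → t < b → f t = 0) :
    ∑ t ∈ Ico a b, f t = ∑ t ∈ Icc a (a + H), f t := by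
  have htail : ∑ t ∈ Ico (a + H + 1) b, f t = 0 :=
    sum_eq_zero fun t ht => hf t (mem_Ico.1 ht).1 (mem_Ico.1 ht).2
  rw [← sum_Ico_consecutive f (by omega : a ≤ a + H + 1) hab, htail, add_zero,
    Ico_add_one_right_eq_Icc]

theorem Finset.sum_Ico_le_nsmul_of_window_sum_le [AddCommMonoid M] [PartialOrder M]
    [IsOrderedAddMonoid M] {g : ℕ → M} {τ : ℕ → ℕ} {n H : ℕ} {ε : M}
    (hgap : ∀ i < n, τ i + H < τ (i + 1))
    (hzero : ∀ i < n, ∀ t, τ i + H < t → t < τ (i + 1) → g t = 0)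
    (hwindow : ∀ i < n, ∑ t ∈ Icc (τ i) (τ i + H), g t ≤ ε) :
    ∑ t ∈ Ico (τ 0) (τ n), g t ≤ n • ε := by
  have hτ : StrictMonoOn τ (Set.Iic n) :=
    strictMonoOn_Iic_of_lt_succ fun i hi => (Nat.le_add_right _ _).trans_lt (hgap i hi)
  rw [sum_Ico_eq_sum_range_sum_Ico g hτ.monotoneOn]
  simpa using sum_le_card_nsmul (range n) _ ε fun i hi => by
    rw [sum_Ico_eq_sum_Icc_of_eq_zero (hgap i (mem_range.1 hi)) (hzero i (mem_range.1 hi))]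
    exact hwindow i (mem_range.1 hi)

theorem Nat.apply_zero_add_le_of_lt_succ {τ : ℕ → ℕ} {n : ℕ}
    (hτ : ∀ i < n, τ i < τ (i + 1)) : τ 0 + n ≤ τ n := by
  induction n with
  | zero => simp
  | succ n ih =>
    have := ih fun i hi => hτ i (by omega)
    have := hτ n n.lt_succ_self
    omega

theorem one_div_mul_sub_div_le_one_div_mul {A B c T : ℝ} (hT : 0 ≤ T) (h : A - B ≤ c) :
    1 / T * A - c / T ≤ 1 / T * B := by
  rw [one_div_mul_eq_div, one_div_mul_eq_div, ← sub_div]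
  exact div_le_div_of_nonneg_right (by linarith) hT

theorem equilibrium_of_window_regret_general
    (T H n : ℕ)
    (γ : ℝ)
    (ε : ℝ) (hε : 0 ≤ ε)
    (τ : ℕ → ℕ)
    (hτ0 : τ 0 = 1) (hτn : τ n = T + 1)
    (hτgap : ∀ i < n, H + 1 ≤ τ (i + 1) - τ i)
    (rstar rtil : ℕ → ℝ)
    (hagree : ∀ i < n, ∀ t, τ i + H < t → t ≤ τ (i + 1) - 1 → rstar t = rtil t)
    (hwindow : ∀ i < n,
      ∑ t ∈ Finset.Icc (τ i) (τ i + H), γ ^ t * (rstar t - rtil t) ≤ ε) :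
    ((1 : ℝ) / T) * ∑ t ∈ Finset.Icc 1 T, γ ^ t * rtil t ≥
        ((1 : ℝ) / T) * ∑ t ∈ Finset.Icc 1 T, γ ^ t * rstar t - ε * n / T ∧
    ((1 : ℝ) / T) * ∑ t ∈ Finset.Icc 1 T, γ ^ t * rtil t ≥
        ((1 : ℝ) / T) * ∑ t ∈ Finset.Icc 1 T, γ ^ t * rstar t - ε := by
  have hgap : ∀ i < n, τ i + H < τ (i + 1) := fun i hi => by have := hτgap i hi; omega
  have hIcc : Icc 1 T = Ico (τ 0) (τ n) := by rw [hτ0, hτn, Ico_add_one_right_eq_Icc]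
  have hregret : ∑ t ∈ Icc 1 T, γ ^ t * rstar t - ∑ t ∈ Icc 1 T, γ ^ t * rtil t ≤ ε * n := by
    rw [← sum_sub_distrib, hIcc, mul_comm, ← nsmul_eq_mul]
    refine sum_Ico_le_nsmul_of_window_sum_le hgap (fun i hi t h₁ h₂ => ?_) (fun i hi => ?_)
    · rw [hagree i hi t h₁ (by omega), sub_self]
    · simpa only [mul_sub] using hwindow i hi
  have hnT : (n : ℝ) ≤ T := by
    have := Nat.apply_zero_add_le_of_lt_succ fun i hi =>
      (Nat.le_add_right _ _).trans_lt (hgap i hi)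
    exact_mod_cast (by omega : n ≤ T)
  have hεnT : ε * n / T ≤ ε :=
    div_le_of_le_mul₀ T.cast_nonneg hε (mul_le_mul_of_nonneg_left hnT hε)
  have hbound := one_div_mul_sub_div_le_one_div_mul T.cast_nonneg hregret
  exact ⟨hbound, by linarith⟩

/-- Quantitative core of Theorem 1: if the two reward sequences agree outside
the windows `{τ i, ..., τ i + H}` and each window has discounted regret at
most `ε`, then the bandit-modified policy is an `ε`-equilibrium policy. -/
theorem equilibrium_of_window_regret
    (T H n : ℕ) (hn : 1 ≤ n)
    (γ : ℝ) (hγ0 : 0 < γ) (hγ1 : γ ≤ 1)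
    (ε : ℝ) (hε : 0 ≤ ε)
    (τ : ℕ → ℕ)
    (hτmono : ∀ i < n, τ i < τ (i + 1))
    (hτ0 : τ 0 = 1) (hτn : τ n = T + 1)
    (hτgap : ∀ i < n, H + 1 ≤ τ (i + 1) - τ i)
    (rstar rtil : ℕ → ℝ)
    (hagree : ∀ i < n, ∀ t, τ i + H < t → t ≤ τ (i + 1) - 1 → rstar t = rtil t)
    (hwindow : ∀ i < n,
      ∑ t ∈ Finset.Icc (τ i) (τ i + H), γ ^ t * (rstar t - rtil t) ≤ ε) :
    ((1 : ℝ) / T) * ∑ t ∈ Finset.Icc 1 T, γ ^ t * rtil t ≥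
        ((1 : ℝ) / T) * ∑ t ∈ Finset.Icc 1 T, γ ^ t * rstar t - ε * n / T ∧
    ((1 : ℝ) / T) * ∑ t ∈ Finset.Icc 1 T, γ ^ t * rtil t ≥
        ((1 : ℝ) / T) * ∑ t ∈ Finset.Icc 1 T, γ ^ t * rstar t - ε :=
  equilibrium_of_window_regret_general T H n γ ε hε τ hτ0 hτn hτgap rstar rtil hagree hwindow
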